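/- Let J(z) be the 5×5 matrix with rows (0, 0, 0, 2z₁, 12z₄), (0, 0, 1, 0, 0), (0, −1, 0, 0, −2z₁), (−2z₁, 0, 0, 0, −8z₁z₂ + 2z₅), (−12z₄, 0, 2z₁, 8z₁z₂ − 2z₅, 0), and for smooth functions F, G on ℝ⁵ define {F,G}(z) = Σ_{k,l=1}^{5} J_{kl}(z)(∂F/∂z_k)(∂G/∂z_l). Then this bracket satisfies the Jacobi identity: for all polynomial functions F, G, H on ℝ⁵, {F,{G,H}} + {G,{H,F}} + {H,{F,G}} = 0; equivalently, for all indices k, m, n ∈ {1,…,5} and all z ∈ ℝ⁵, Σ_{l=1}^{5} (J_{lk} ∂J_{mn}/∂z_l + J_{lm} ∂J_{nk}/∂z_l + J_{ln} ∂J_{km}/∂z_l) = 0. -/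

import Mathlib

/-!
Contracting with the coordinate basis, `∑ l, J_{lk} ∂_l J_{mn}` is the derivative of `J_{mn}` in
the direction of the `k`-th column of `J`. The entries of `J` are polynomials of degree at most two,
so this derivative is an explicit matrix `poissonJDeriv z v`, and the cyclic sum becomes a polynomial
identity in `z`, checked entry by entry.
-/

/-- The Poisson matrix of the five-dimensional system (8). Coordinates:
z 0 = z₁, z 1 = z₂, z 2 = z₃, z 3 = z₄, z 4 = z₅. -/
def poissonJ (z : Fin 5 → ℝ) : Matrix (Fin 5) (Fin 5) ℝ :=
  !![0, 0, 0, 2 * z 0, 12 * z 3;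
     0, 0, 1, 0, 0;
     0, -1, 0, 0, -2 * z 0;
     -2 * z 0, 0, 0, 0, -8 * z 0 * z 1 + 2 * z 4;
     -12 * z 3, 0, 2 * z 0, 8 * z 0 * z 1 - 2 * z 4, 0]

theorem sum_mul_map_single_one {R ι F : Type*} [CommSemiring R] [Fintype ι] [DecidableEq ι]
    [FunLike F (ι → R) R] [LinearMapClass F R (ι → R) R] (L : F) (c : ι → R) :
    ∑ l, c l * L (Pi.single l 1) = L c := by
  simp_rw [← smul_eq_mul, ← map_smul, ← map_sum]
  congr 1
  ext i
  simp [Pi.single_apply]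

theorem fderiv_eval {𝕜 ι : Type*} [NontriviallyNormedField 𝕜] [Fintype ι] (i : ι) (z : ι → 𝕜) :
    fderiv 𝕜 (fun w : ι → 𝕜 => w i) z = ContinuousLinearMap.proj i :=
  (hasFDerivAt_apply i z).fderiv

def poissonJDeriv (z v : Fin 5 → ℝ) : Matrix (Fin 5) (Fin 5) ℝ :=
  !![0, 0, 0, 2 * v 0, 12 * v 3;
     0, 0, 0, 0, 0;
     0, 0, 0, 0, -2 * v 0;
     -2 * v 0, 0, 0, 0, -8 * (v 0 * z 1 + z 0 * v 1) + 2 * v 4;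
     -12 * v 3, 0, 2 * v 0, 8 * (v 0 * z 1 + z 0 * v 1) - 2 * v 4, 0]

theorem fderiv_poissonJ_apply (m n : Fin 5) (z v : Fin 5 → ℝ) :
    fderiv ℝ (fun w => poissonJ w m n) z v = poissonJDeriv z v m n := by
  fin_cases m <;> fin_cases n <;>
    simp (disch := fun_prop) [poissonJ, poissonJDeriv, fderiv_fun_mul, fderiv_fun_sub,
      fderiv_fun_add, fderiv_eval] <;>
    ring

theorem poissonJDeriv_cyclic_sum (k m n : Fin 5) (z : Fin 5 → ℝ) :
    poissonJDeriv z (fun l => poissonJ z l k) m n + poissonJDeriv z (fun l => poissonJ z l m) n k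
      + poissonJDeriv z (fun l => poissonJ z l n) k m = 0 := by
  fin_cases k <;> fin_cases m <;> fin_cases n <;> simp [poissonJ, poissonJDeriv] <;> ring

theorem poissonJ_jacobi (k m n : Fin 5) (z : Fin 5 → ℝ) :
    ∑ l : Fin 5,
      (poissonJ z l k * fderiv ℝ (fun w => poissonJ w m n) z (Pi.single l 1)
      + poissonJ z l m * fderiv ℝ (fun w => poissonJ w n k) z (Pi.single l 1)
      + poissonJ z l n * fderiv ℝ (fun w => poissonJ w k m) z (Pi.single l 1)) = 0 := by
  rw [Finset.sum_add_distrib, Finset.sum_add_distrib, sum_mul_map_single_one,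
    sum_mul_map_single_one, sum_mul_map_single_one]
  simp only [fderiv_poissonJ_apply]
  exact poissonJDeriv_cyclic_sum k m n z
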